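/- Every proper constraint is satisfiable: for every proper constraint d there exists a finite directed multigraph G satisfying d. -/

import Mathlib

/-- A directed multigraph: a set of nodes, a set of edges, and source/target maps. -/
structure MGraph : Type 1 where
  V : Type
  E : Type
  s : E → V
  t : E → V

/-- A morphism of directed multigraphs: maps on nodes and edges compatible with
sources and targets. -/
structure GraphHom (G H : MGraph) : Type where
  fV : G.V → H.V
  fE : G.E → H.E
  src : ∀ e, H.s (fE e) = fV (G.s e)
  tgt : ∀ e, H.t (fE e) = fV (G.t e)

/-- Composition of graph morphisms. -/
def GraphHom.comp {G H K : MGraph} (g : GraphHom H K) (f : GraphHom G H) :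
    GraphHom G K where
  fV := g.fV ∘ f.fV
  fE := g.fE ∘ f.fE
  src e := by simp [g.src, f.src]
  tgt e := by simp [g.tgt, f.tgt]

/-- A graph morphism is injective if it is injective on nodes and on edges. -/
def GraphHom.Injective {G H : MGraph} (f : GraphHom G H) : Prop :=
  Function.Injective f.fV ∧ Function.Injective f.fE

/-- A graph is finite if its node set and edge set are finite. -/
def MGraph.Finite (G : MGraph) : Prop :=
  _root_.Finite G.V ∧ _root_.Finite G.E

/-- A graph morphism is surjective if it is surjective on nodes and on edges. -/
def GraphHom.Surjective {G H : MGraph} (f : GraphHom G H) : Prop :=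
  Function.Surjective f.fV ∧ Function.Surjective f.fE

/-- A graph morphism is a real inclusion if it is injective but not surjective. -/
def GraphHom.Real {G H : MGraph} (f : GraphHom G H) : Prop :=
  f.Injective ∧ ¬ f.Surjective

/-- Nested graph conditions over a graph `A`, where every morphism occurring in a
condition is a real inclusion into a finite graph. -/
inductive Cond : MGraph → Type 1 where
  | tru (A : MGraph) : Cond A
  | ex {A C : MGraph} (a : GraphHom A C) (hC : C.Finite) (ha : a.Real)
      (c : Cond C) : Cond A
  | not {A : MGraph} (c : Cond A) : Cond A
  | and {A : MGraph} (c₁ c₂ : Cond A) : Cond A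

/-- Satisfaction of a condition over `A` by a morphism `A → G`. -/
def Sat {G : MGraph} : {A : MGraph} → GraphHom A G → Cond A → Prop
  | _, _, Cond.tru _ => True
  | _, p, Cond.ex a _ _ c => ∃ q, GraphHom.Injective q ∧ q.comp a = p ∧ Sat q c
  | _, p, Cond.not c => ¬ Sat p c
  | _, p, Cond.and c₁ c₂ => Sat p c₁ ∧ Sat p c₂

/-- The empty directed multigraph. -/
def MGraph.empty : MGraph where
  V := PEmpty
  E := PEmpty
  s := PEmpty.elim
  t := PEmpty.elim

/-- The unique morphism from the empty graph into any graph. -/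
def emptyHom (G : MGraph) : GraphHom MGraph.empty G where
  fV := PEmpty.elim
  fE := PEmpty.elim
  src e := e.elim
  tgt e := e.elim

/-- A graph satisfies a constraint (a condition over the empty graph) iff the unique
morphism from the empty graph satisfies it. -/
def GSat (G : MGraph) (d : Cond MGraph.empty) : Prop :=
  Sat (emptyHom G) d

/-- Conditions with alternating quantifiers ending with `true`.  `Alt true c` means
`c` is of the form `∃(a₁, ∀(a₂, ∃(a₃, …, true)))` and `Alt false c` means `c` is of
the form `∀(a₁, ∃(a₂, ∀(a₃, …, true)))`, where `∀(a, c)` abbreviates `¬∃(a, ¬c)`. -/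
inductive Alt : {A : MGraph} → Bool → Cond A → Prop
  | tru {A : MGraph} (b : Bool) : Alt b (Cond.tru A)
  | ex {A C : MGraph} (a : GraphHom A C) (hC : C.Finite) (ha : a.Real) {c : Cond C} :
      Alt false c → Alt true (Cond.ex a hC ha c)
  | all {A C : MGraph} (a : GraphHom A C) (hC : C.Finite) (ha : a.Real) {c : Cond C} :
      Alt true c → Alt false (Cond.not (Cond.ex a hC ha (Cond.not c)))

/-- Proper conditions: conditions with alternating quantifiers ending with `true`,
conditions of the form `∃(a, ∄b)`, and conditions of the form `∄b`, where `∄b`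
abbreviates `¬∃(b, true)`. -/
inductive Proper : {A : MGraph} → Cond A → Prop
  | alt {A : MGraph} (b : Bool) {c : Cond A} : Alt b c → Proper c
  | exNotEx {A C B : MGraph} (a : GraphHom A C) (hC : C.Finite) (ha : a.Real)
      (b : GraphHom C B) (hB : B.Finite) (hb : b.Real) :
      Proper (Cond.ex a hC ha (Cond.not (Cond.ex b hB hb (Cond.tru B))))
  | notEx {A C : MGraph} (b : GraphHom A C) (hC : C.Finite) (hb : b.Real) :
      Proper (Cond.not (Cond.ex b hC hb (Cond.tru C)))

/-! A real inclusion `a : ∅ → C` forces `C` to be nonempty, so the empty graph satisfies every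
constraint of the form `¬∃(a, c)`. A real inclusion `b : C → B` into a finite graph admits no
injective morphism `B → C` (it would make `b` bijective by counting), so the identity of `C`
satisfies every `¬∃(b, c)`; hence `C` itself satisfies `∃(a, true)`, `∃(a, ∀(b, c))` and
`∃(a, ∄b)`. -/

def GraphHom.id (G : MGraph) : GraphHom G G := ⟨_root_.id, _root_.id, fun _ => rfl, fun _ => rfl⟩

theorem GraphHom.id_injective (G : MGraph) : (GraphHom.id G).Injective :=
  ⟨Function.injective_id, Function.injective_id⟩

instance (G : MGraph) : Subsingleton (GraphHom MGraph.empty G) :=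
  ⟨fun ⟨_, _, _, _⟩ ⟨_, _, _, _⟩ => by congr <;> funext x <;> exact x.elim⟩

theorem MGraph.finite_empty : MGraph.empty.Finite :=
  ⟨inferInstanceAs (_root_.Finite PEmpty), inferInstanceAs (_root_.Finite PEmpty)⟩

theorem GraphHom.Real.not_injective_of_finite {A B : MGraph} {f : GraphHom A B} (hf : f.Real)
    (hB : B.Finite) (g : GraphHom B A) : ¬ g.Injective := by
  rintro ⟨hgV, hgE⟩
  have := hB.1
  have := hB.2
  exact hf.2 ⟨(Finite.surjective_of_injective (hf.1.1.comp hgV)).of_comp,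
    (Finite.surjective_of_injective (hf.1.2.comp hgE)).of_comp⟩

theorem sat_id_not_ex {C B : MGraph} (b : GraphHom C B) (hB : B.Finite) (hb : b.Real)
    (c : Cond B) : Sat (GraphHom.id C) (Cond.not (Cond.ex b hB hb c)) :=
  fun ⟨q, hq, _, _⟩ => hb.not_injective_of_finite hB q hq

theorem sat_id_of_alt_false {C : MGraph} {c : Cond C} (h : Alt false c) :
    Sat (GraphHom.id C) c := by
  cases h with
  | tru => trivial
  | all b hB hb _ => exact sat_id_not_ex b hB hb _

theorem gSat_ex_of_sat_id {C : MGraph} (a : GraphHom MGraph.empty C) (hC : C.Finite)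
    (ha : a.Real) {c : Cond C} (h : Sat (GraphHom.id C) c) : GSat C (Cond.ex a hC ha c) :=
  ⟨GraphHom.id C, GraphHom.id_injective C, Subsingleton.elim _ _, h⟩

theorem gSat_empty_not_ex {C : MGraph} (b : GraphHom MGraph.empty C) (hC : C.Finite)
    (hb : b.Real) (c : Cond C) : GSat MGraph.empty (Cond.not (Cond.ex b hC hb c)) :=
  fun ⟨q, _, _, _⟩ => hb.2 ⟨fun v => (q.fV v).elim, fun e => (q.fE e).elim⟩

/-- Every proper constraint is satisfiable: for every proper constraint `d` there is
a finite directed multigraph `G` satisfying `d`. -/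
theorem proper_satisfiable (d : Cond MGraph.empty) (hd : Proper d) :
    ∃ G : MGraph, G.Finite ∧ GSat G d := by
  cases hd with
  | alt _ halt =>
    cases halt with
    | tru => exact ⟨MGraph.empty, MGraph.finite_empty, trivial⟩
    | ex a hC ha hc => exact ⟨_, hC, gSat_ex_of_sat_id a hC ha (sat_id_of_alt_false hc)⟩
    | all b hC hb _ => exact ⟨MGraph.empty, MGraph.finite_empty, gSat_empty_not_ex b hC hb _⟩
  | exNotEx a hC ha b hB hb =>
    exact ⟨_, hC, gSat_ex_of_sat_id a hC ha (sat_id_not_ex b hB hb _)⟩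
  | notEx b hC hb => exact ⟨MGraph.empty, MGraph.finite_empty, gSat_empty_not_ex b hC hb _⟩
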